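/- Quantitative composition estimate for the classes 𝒪_k. Let k, n, m be nonnegative integers with n ≥ k, let C₀, C₁ ≥ 0 and τ₀, τ₁ > 0 be reals, and let h ∈ 𝒪_k(n; C₀, τ₀) and f ∈ 𝒪_k(m; C₁, τ₁). Assume that f maps the punctured disc 𝔻*(0,τ₁) into the punctured disc 𝔻*(0,τ₀) (in particular f is nonvanishing there). Then h ∘ f ∈ 𝒪_k(n·m; α_k·C₀·C₁^n, τ₁), where α_k = 2^{k(k+1)/2}. -/

import Mathlib

noncomputable section

/-- Wirtinger derivative `∂ = (∂_s - i ∂_t)/2` of a (real-)smooth function `f : ℂ → ℂ`. -/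
noncomputable def wd (f : ℂ → ℂ) : ℂ → ℂ :=
  fun z => (fderiv ℝ f z 1 - Complex.I * fderiv ℝ f z Complex.I) / 2

/-- Wirtinger derivative `∂̄ = (∂_s + i ∂_t)/2`. -/
noncomputable def wdb (f : ℂ → ℂ) : ℂ → ℂ :=
  fun z => (fderiv ℝ f z 1 + Complex.I * fderiv ℝ f z Complex.I) / 2

/-- The punctured disc `𝔻*(0,τ) = {z : 0 < |z| ≤ τ}`. -/
def Dstar (τ : ℝ) : Set ℂ := {z | 0 < ‖z‖ ∧ ‖z‖ ≤ τ}

/-- `f ∈ 𝒪_k(ℓ; C, τ)`: `f` is smooth (on a neighbourhood of `𝔻*(0,τ)`) and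
`|∂^a ∂̄^b f(z)| ≤ C |z|^{ℓ-a-b}` on `𝔻*(0,τ)` for all `a + b ≤ k`. -/
def OClass (k : ℕ) (ℓ : ℝ) (C τ : ℝ) (f : ℂ → ℂ) : Prop :=
  (∃ U : Set ℂ, IsOpen U ∧ Dstar τ ⊆ U ∧ ContDiffOn ℝ (⊤ : ℕ∞) f U) ∧
    ∀ a b : ℕ, a + b ≤ k → ∀ z ∈ Dstar τ,
      ‖(wd^[a]) ((wdb^[b]) f) z‖ ≤
        C * ‖z‖ ^ (ℓ - (a : ℝ) - (b : ℝ))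

/-! ### Basic pointwise calculus for `wd`, `wdb` -/

private lemma linrep (g : ℂ → ℂ) (z v : ℂ) :
    fderiv ℝ g z v = wd g z * v + wdb g z * (starRingEnd ℂ) v := by
  have h2 : (starRingEnd ℂ) v = (v.re : ℂ) - (v.im : ℂ) * Complex.I := by
    nth_rewrite 1 [← Complex.re_add_im v]
    rw [map_add, map_mul, Complex.conj_I, Complex.conj_ofReal, Complex.conj_ofReal]
    ring
  have h3 : fderiv ℝ g z v
      = (v.re : ℂ) * fderiv ℝ g z 1 + (v.im : ℂ) * fderiv ℝ g z Complex.I := by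
    nth_rewrite 1 [show v = v.re • (1 : ℂ) + v.im • Complex.I by
      rw [Complex.real_smul, Complex.real_smul, mul_one, Complex.re_add_im]]
    rw [map_add, map_smul, map_smul, Complex.real_smul, Complex.real_smul]
  rw [h3, h2]
  simp only [wd, wdb]
  linear_combination ((fderiv ℝ g z 1 - Complex.I * fderiv ℝ g z Complex.I) / 2)
      * (Complex.re_add_im v) + (v.im : ℂ) * fderiv ℝ g z Complex.I * Complex.I_sq

private lemma conj_half_add (x y : ℂ) :
    (starRingEnd ℂ) ((x + Complex.I * y) / 2)
      = ((starRingEnd ℂ) x - Complex.I * (starRingEnd ℂ) y) / 2 := by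
  rw [map_div₀, map_add, map_mul, Complex.conj_I,
    map_ofNat (starRingEnd ℂ) 2]
  ring

private lemma conj_half_sub (x y : ℂ) :
    (starRingEnd ℂ) ((x - Complex.I * y) / 2)
      = ((starRingEnd ℂ) x + Complex.I * (starRingEnd ℂ) y) / 2 := by
  rw [map_div₀, map_sub, map_mul, Complex.conj_I,
    map_ofNat (starRingEnd ℂ) 2]
  ring

private lemma wd_comp {h f : ℂ → ℂ} {z : ℂ} (hh : DifferentiableAt ℝ h (f z))
    (hf : DifferentiableAt ℝ f z) :
    wd (h ∘ f) z = wd h (f z) * wd f z + wdb h (f z) * (starRingEnd ℂ) (wdb f z)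
    ∧ wdb (h ∘ f) z = wd h (f z) * wdb f z + wdb h (f z) * (starRingEnd ℂ) (wd f z) := by
  have hcomp : fderiv ℝ (h ∘ f) z = (fderiv ℝ h (f z)).comp (fderiv ℝ f z) :=
    fderiv_comp z hh hf
  have key : ∀ v, fderiv ℝ (h ∘ f) z v
      = wd h (f z) * fderiv ℝ f z v + wdb h (f z) * (starRingEnd ℂ) (fderiv ℝ f z v) := by
    intro v
    rw [hcomp, ContinuousLinearMap.comp_apply]
    exact linrep h (f z) (fderiv ℝ f z v)
  constructor
  · show (fderiv ℝ (h ∘ f) z 1 - Complex.I * fderiv ℝ (h ∘ f) z Complex.I) / 2 = _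
    rw [key, key]
    show _ = _ * ((fderiv ℝ f z 1 - Complex.I * fderiv ℝ f z Complex.I) / 2)
      + _ * (starRingEnd ℂ) ((fderiv ℝ f z 1 + Complex.I * fderiv ℝ f z Complex.I) / 2)
    rw [conj_half_add]
    ring
  · show (fderiv ℝ (h ∘ f) z 1 + Complex.I * fderiv ℝ (h ∘ f) z Complex.I) / 2 = _
    rw [key, key]
    show _ = _ * ((fderiv ℝ f z 1 + Complex.I * fderiv ℝ f z Complex.I) / 2)
      + _ * (starRingEnd ℂ) ((fderiv ℝ f z 1 - Complex.I * fderiv ℝ f z Complex.I) / 2)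
    rw [conj_half_sub]
    ring

private lemma wd_mul {g₁ g₂ : ℂ → ℂ} {z : ℂ} (h1 : DifferentiableAt ℝ g₁ z)
    (h2 : DifferentiableAt ℝ g₂ z) :
    wd (fun x => g₁ x * g₂ x) z = wd g₁ z * g₂ z + g₁ z * wd g₂ z
    ∧ wdb (fun x => g₁ x * g₂ x) z = wdb g₁ z * g₂ z + g₁ z * wdb g₂ z := by
  have key : ∀ v, fderiv ℝ (fun x => g₁ x * g₂ x) z v
      = g₁ z * fderiv ℝ g₂ z v + g₂ z * fderiv ℝ g₁ z v := by
    intro v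
    rw [fderiv_fun_mul h1 h2]
    simp [smul_eq_mul]
  constructor
  · show (fderiv ℝ (fun x => g₁ x * g₂ x) z 1
        - Complex.I * fderiv ℝ (fun x => g₁ x * g₂ x) z Complex.I) / 2 = _
    rw [key, key]
    show _ = (fderiv ℝ g₁ z 1 - Complex.I * fderiv ℝ g₁ z Complex.I) / 2 * g₂ z
      + g₁ z * ((fderiv ℝ g₂ z 1 - Complex.I * fderiv ℝ g₂ z Complex.I) / 2)
    ring
  · show (fderiv ℝ (fun x => g₁ x * g₂ x) z 1
        + Complex.I * fderiv ℝ (fun x => g₁ x * g₂ x) z Complex.I) / 2 = _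
    rw [key, key]
    show _ = (fderiv ℝ g₁ z 1 + Complex.I * fderiv ℝ g₁ z Complex.I) / 2 * g₂ z
      + g₁ z * ((fderiv ℝ g₂ z 1 + Complex.I * fderiv ℝ g₂ z Complex.I) / 2)
    ring

private lemma wd_add {g₁ g₂ : ℂ → ℂ} {z : ℂ} (h1 : DifferentiableAt ℝ g₁ z)
    (h2 : DifferentiableAt ℝ g₂ z) :
    wd (fun x => g₁ x + g₂ x) z = wd g₁ z + wd g₂ z
    ∧ wdb (fun x => g₁ x + g₂ x) z = wdb g₁ z + wdb g₂ z := by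
  have key : fderiv ℝ (fun x => g₁ x + g₂ x) z = fderiv ℝ g₁ z + fderiv ℝ g₂ z :=
    fderiv_add h1 h2
  constructor
  · show (fderiv ℝ (fun x => g₁ x + g₂ x) z 1
        - Complex.I * fderiv ℝ (fun x => g₁ x + g₂ x) z Complex.I) / 2 = _
    rw [key]
    show _ = (fderiv ℝ g₁ z 1 - Complex.I * fderiv ℝ g₁ z Complex.I) / 2
      + (fderiv ℝ g₂ z 1 - Complex.I * fderiv ℝ g₂ z Complex.I) / 2
    simp only [ContinuousLinearMap.add_apply]
    ring
  · show (fderiv ℝ (fun x => g₁ x + g₂ x) z 1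
        + Complex.I * fderiv ℝ (fun x => g₁ x + g₂ x) z Complex.I) / 2 = _
    rw [key]
    show _ = (fderiv ℝ g₁ z 1 + Complex.I * fderiv ℝ g₁ z Complex.I) / 2
      + (fderiv ℝ g₂ z 1 + Complex.I * fderiv ℝ g₂ z Complex.I) / 2
    simp only [ContinuousLinearMap.add_apply]
    ring
/-! ### Conjugation -/

private lemma fderiv_conj_apply (g : ℂ → ℂ) (z v : ℂ) :
    fderiv ℝ (fun x => (starRingEnd ℂ) (g x)) z v = (starRingEnd ℂ) (fderiv ℝ g z v) := by
  by_cases hg : DifferentiableAt ℝ g z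
  · have h1 : fderiv ℝ (fun x => Complex.conjCLE (g x)) z
        = (Complex.conjCLE : ℂ →L[ℝ] ℂ).comp (fderiv ℝ g z) :=
      (Complex.conjCLE.toContinuousLinearMap.hasFDerivAt.comp z hg.hasFDerivAt).fderiv
    have h2 : fderiv ℝ (fun x => (starRingEnd ℂ) (g x)) z
        = (Complex.conjCLE : ℂ →L[ℝ] ℂ).comp (fderiv ℝ g z) := h1
    rw [h2]
    rfl
  · have hng : ¬ DifferentiableAt ℝ (fun x => (starRingEnd ℂ) (g x)) z := by
      intro hcontra
      apply hg
      have : DifferentiableAt ℝ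
          (fun x => Complex.conjCLE ((fun y => (starRingEnd ℂ) (g y)) x)) z :=
        Complex.conjCLE.toContinuousLinearMap.differentiableAt.comp z hcontra
      simpa using this
    rw [fderiv_zero_of_not_differentiableAt hg, fderiv_zero_of_not_differentiableAt hng]
    simp

private lemma wd_conj (g : ℂ → ℂ) :
    wd (fun x => (starRingEnd ℂ) (g x)) = fun z => (starRingEnd ℂ) (wdb g z) := by
  funext z
  show (fderiv ℝ (fun x => (starRingEnd ℂ) (g x)) z 1
      - Complex.I * fderiv ℝ (fun x => (starRingEnd ℂ) (g x)) z Complex.I) / 2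
    = (starRingEnd ℂ) ((fderiv ℝ g z 1 + Complex.I * fderiv ℝ g z Complex.I) / 2)
  rw [fderiv_conj_apply, fderiv_conj_apply, conj_half_add]

private lemma wdb_conj (g : ℂ → ℂ) :
    wdb (fun x => (starRingEnd ℂ) (g x)) = fun z => (starRingEnd ℂ) (wd g z) := by
  funext z
  show (fderiv ℝ (fun x => (starRingEnd ℂ) (g x)) z 1
      + Complex.I * fderiv ℝ (fun x => (starRingEnd ℂ) (g x)) z Complex.I) / 2
    = (starRingEnd ℂ) ((fderiv ℝ g z 1 - Complex.I * fderiv ℝ g z Complex.I) / 2)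
  rw [fderiv_conj_apply, fderiv_conj_apply, conj_half_sub]

/-! ### Smoothness of the Wirtinger derivatives -/

private lemma smooth_wd {U : Set ℂ} (hU : IsOpen U) {g : ℂ → ℂ} (hg : ContDiffOn ℝ (⊤ : ℕ∞) g U) :
    ContDiffOn ℝ (⊤ : ℕ∞) (wd g) U ∧ ContDiffOn ℝ (⊤ : ℕ∞) (wdb g) U := by
  have hf' : ContDiffOn ℝ (⊤ : ℕ∞) (fderiv ℝ g) U := hg.fderiv_of_isOpen hU (by simp)
  have h1 : ContDiffOn ℝ (⊤ : ℕ∞) (fun z => fderiv ℝ g z 1) U := hf'.clm_apply contDiffOn_const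
  have hI : ContDiffOn ℝ (⊤ : ℕ∞) (fun z => fderiv ℝ g z Complex.I) U := hf'.clm_apply contDiffOn_const
  constructor
  · exact ((h1.sub (contDiffOn_const.mul hI)).div_const 2)
  · exact ((h1.add (contDiffOn_const.mul hI)).div_const 2)

private lemma diff_on_open {F : Type*} [NormedAddCommGroup F] [NormedSpace ℝ F]
    {U : Set ℂ} (hU : IsOpen U) {g : ℂ → F}
    (hg : ContDiffOn ℝ (⊤ : ℕ∞) g U) {z : ℂ} (hz : z ∈ U) : DifferentiableAt ℝ g z :=
  ((hg z hz).differentiableWithinAt (by simp)).differentiableAt (hU.mem_nhds hz)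

/-! ### Congruence on open sets -/

private lemma wd_congr {U : Set ℂ} (hU : IsOpen U) {g₁ g₂ : ℂ → ℂ}
    (hg : Set.EqOn g₁ g₂ U) {z : ℂ} (hz : z ∈ U) :
    wd g₁ z = wd g₂ z ∧ wdb g₁ z = wdb g₂ z := by
  have hev : g₁ =ᶠ[nhds z] g₂ := Filter.eventuallyEq_of_mem (hU.mem_nhds hz) hg
  have hfd : fderiv ℝ g₁ z = fderiv ℝ g₂ z := Filter.EventuallyEq.fderiv_eq hev
  constructor
  · show (fderiv ℝ g₁ z 1 - Complex.I * fderiv ℝ g₁ z Complex.I) / 2 = _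
    rw [hfd]; rfl
  · show (fderiv ℝ g₁ z 1 + Complex.I * fderiv ℝ g₁ z Complex.I) / 2 = _
    rw [hfd]; rfl

private lemma wdb_iter_congr {U : Set ℂ} (hU : IsOpen U) :
    ∀ (b : ℕ) {g₁ g₂ : ℂ → ℂ}, Set.EqOn g₁ g₂ U → Set.EqOn (wdb^[b] g₁) (wdb^[b] g₂) U := by
  intro b
  induction b with
  | zero => intro g₁ g₂ hg; simpa using hg
  | succ b ih =>
    intro g₁ g₂ hg
    rw [Function.iterate_succ_apply, Function.iterate_succ_apply]
    exact ih (fun z hz => (wd_congr hU hg hz).2)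

private lemma wd_iter_congr {U : Set ℂ} (hU : IsOpen U) :
    ∀ (a : ℕ) {g₁ g₂ : ℂ → ℂ}, Set.EqOn g₁ g₂ U → Set.EqOn (wd^[a] g₁) (wd^[a] g₂) U := by
  intro a
  induction a with
  | zero => intro g₁ g₂ hg; simpa using hg
  | succ a ih =>
    intro g₁ g₂ hg
    rw [Function.iterate_succ_apply, Function.iterate_succ_apply]
    exact ih (fun z hz => (wd_congr hU hg hz).1)

/-! ### Commutation of `wd` and `wdb` -/

private lemma wd_wdb_comm {U : Set ℂ} (hU : IsOpen U) {g : ℂ → ℂ}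
    (hg : ContDiffOn ℝ (⊤ : ℕ∞) g U) {z : ℂ} (hz : z ∈ U) :
    wd (wdb g) z = wdb (wd g) z := by
  have hf' : ContDiffOn ℝ (⊤ : ℕ∞) (fderiv ℝ g) U := hg.fderiv_of_isOpen hU (by simp)
  have hdiff : DifferentiableAt ℝ (fderiv ℝ g) z := diff_on_open hU hf' hz
  have hdw : ∀ w : ℂ, DifferentiableAt ℝ (fun x => fderiv ℝ g x w) z := fun w =>
    hdiff.clm_apply (differentiableAt_const w)
  have happ : ∀ w v : ℂ, fderiv ℝ (fun x => fderiv ℝ g x w) z v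
      = fderiv ℝ (fderiv ℝ g) z v w := by
    intro w v
    rw [fderiv_clm_apply hdiff (differentiableAt_const w)]
    simp
  have hsymm : fderiv ℝ (fderiv ℝ g) z 1 Complex.I = fderiv ℝ (fderiv ℝ g) z Complex.I 1 := by
    have hat : ContDiffAt ℝ (⊤ : ℕ∞) g z := (hg z hz).contDiffAt (hU.mem_nhds hz)
    exact hat.isSymmSndFDerivAt (by rw [minSmoothness_of_isRCLikeNormedField]; exact WithTop.coe_le_coe.mpr le_top) 1 Complex.I
  have e1 : ∀ v : ℂ, fderiv ℝ (wdb g) z v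
      = (fderiv ℝ (fderiv ℝ g) z v 1 + Complex.I * fderiv ℝ (fderiv ℝ g) z v Complex.I) / 2 := by
    intro v
    have hrw : wdb g
        = fun x => (2:ℂ)⁻¹ * (fderiv ℝ g x 1 + Complex.I * fderiv ℝ g x Complex.I) := by
      funext x
      show (fderiv ℝ g x 1 + Complex.I * fderiv ℝ g x Complex.I) / 2 = _
      ring
    rw [hrw, fderiv_const_mul ((hdw 1).fun_add ((hdw Complex.I).const_mul Complex.I)),
      fderiv_fun_add (hdw 1) ((hdw Complex.I).const_mul Complex.I),
      fderiv_const_mul (hdw Complex.I)]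
    simp only [ContinuousLinearMap.smul_apply, ContinuousLinearMap.add_apply, smul_eq_mul, happ]
    ring
  have e2 : ∀ v : ℂ, fderiv ℝ (wd g) z v
      = (fderiv ℝ (fderiv ℝ g) z v 1 - Complex.I * fderiv ℝ (fderiv ℝ g) z v Complex.I) / 2 := by
    intro v
    have hrw : wd g
        = fun x => (2:ℂ)⁻¹ * (fderiv ℝ g x 1 - Complex.I * fderiv ℝ g x Complex.I) := by
      funext x
      show (fderiv ℝ g x 1 - Complex.I * fderiv ℝ g x Complex.I) / 2 = _
      ring
    rw [hrw, fderiv_const_mul ((hdw 1).fun_sub ((hdw Complex.I).const_mul Complex.I)),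
      fderiv_fun_sub (hdw 1) ((hdw Complex.I).const_mul Complex.I),
      fderiv_const_mul (hdw Complex.I)]
    simp only [ContinuousLinearMap.smul_apply, ContinuousLinearMap.sub_apply, smul_eq_mul, happ]
    ring
  show (fderiv ℝ (wdb g) z 1 - Complex.I * fderiv ℝ (wdb g) z Complex.I) / 2
      = (fderiv ℝ (wd g) z 1 + Complex.I * fderiv ℝ (wd g) z Complex.I) / 2
  rw [e1 1, e1 Complex.I, e2 1, e2 Complex.I, hsymm]
  ring

/-! ### Swapping iterates -/

private lemma smooth_wdb_iter {U : Set ℂ} (hU : IsOpen U) :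
    ∀ (b : ℕ) {g : ℂ → ℂ}, ContDiffOn ℝ (⊤ : ℕ∞) g U → ContDiffOn ℝ (⊤ : ℕ∞) (wdb^[b] g) U := by
  intro b
  induction b with
  | zero => intro g hg; simpa using hg
  | succ b ih =>
    intro g hg
    rw [Function.iterate_succ_apply]
    exact ih ((smooth_wd hU hg).2)

private lemma swap_one {U : Set ℂ} (hU : IsOpen U) :
    ∀ (b : ℕ) {g : ℂ → ℂ}, ContDiffOn ℝ (⊤ : ℕ∞) g U →
      Set.EqOn (wd (wdb^[b] g)) (wdb^[b] (wd g)) U := by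
  intro b
  induction b with
  | zero => intro g hg z hz; simp
  | succ b ih =>
    intro g hg z hz
    rw [Function.iterate_succ_apply, Function.iterate_succ_apply]
    calc wd (wdb^[b] (wdb g)) z = wdb^[b] (wd (wdb g)) z := ih ((smooth_wd hU hg).2) hz
      _ = wdb^[b] (wdb (wd g)) z :=
        wdb_iter_congr hU b (fun x hx => wd_wdb_comm hU hg hx) hz

private lemma swap_iter {U : Set ℂ} (hU : IsOpen U) :
    ∀ (a b : ℕ) {g : ℂ → ℂ}, ContDiffOn ℝ (⊤ : ℕ∞) g U →
      Set.EqOn (wd^[a] (wdb^[b] g)) (wdb^[b] (wd^[a] g)) U := by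
  intro a
  induction a with
  | zero => intro b g hg z hz; simp
  | succ a ih =>
    intro b g hg z hz
    rw [Function.iterate_succ_apply]
    calc wd^[a] (wd (wdb^[b] g)) z
        = wd^[a] (wdb^[b] (wd g)) z := wd_iter_congr hU a (swap_one hU b hg) hz
      _ = wdb^[b] (wd^[a] (wd g)) z := ih b ((smooth_wd hU hg).1) hz
      _ = wdb^[b] (wd^[a + 1] g) z := by rw [← Function.iterate_succ_apply]

/-! ### Iterated additivity -/

private lemma wdb_iter_add {U : Set ℂ} (hU : IsOpen U) :
    ∀ (b : ℕ) {g₁ g₂ : ℂ → ℂ}, ContDiffOn ℝ (⊤ : ℕ∞) g₁ U → ContDiffOn ℝ (⊤ : ℕ∞) g₂ U →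
      Set.EqOn (wdb^[b] (fun x => g₁ x + g₂ x))
        (fun x => wdb^[b] g₁ x + wdb^[b] g₂ x) U := by
  intro b
  induction b with
  | zero => intro g₁ g₂ _ _ z hz; simp
  | succ b ih =>
    intro g₁ g₂ h₁ h₂ z hz
    rw [Function.iterate_succ_apply]
    calc wdb^[b] (wdb fun x => g₁ x + g₂ x) z
        = wdb^[b] (fun x => wdb g₁ x + wdb g₂ x) z := by
          refine wdb_iter_congr hU b (fun x hx => ?_) hz
          exact (wd_add (diff_on_open hU h₁ hx) (diff_on_open hU h₂ hx)).2
      _ = wdb^[b] (wdb g₁) z + wdb^[b] (wdb g₂) z :=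
          ih ((smooth_wd hU h₁).2) ((smooth_wd hU h₂).2) hz
      _ = _ := by rw [← Function.iterate_succ_apply, ← Function.iterate_succ_apply]

private lemma wd_iter_add {U : Set ℂ} (hU : IsOpen U) :
    ∀ (a : ℕ) {g₁ g₂ : ℂ → ℂ}, ContDiffOn ℝ (⊤ : ℕ∞) g₁ U → ContDiffOn ℝ (⊤ : ℕ∞) g₂ U →
      Set.EqOn (wd^[a] (fun x => g₁ x + g₂ x))
        (fun x => wd^[a] g₁ x + wd^[a] g₂ x) U := by
  intro a
  induction a with
  | zero => intro g₁ g₂ _ _ z hz; simp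
  | succ a ih =>
    intro g₁ g₂ h₁ h₂ z hz
    rw [Function.iterate_succ_apply]
    calc wd^[a] (wd fun x => g₁ x + g₂ x) z
        = wd^[a] (fun x => wd g₁ x + wd g₂ x) z := by
          refine wd_iter_congr hU a (fun x hx => ?_) hz
          exact (wd_add (diff_on_open hU h₁ hx) (diff_on_open hU h₂ hx)).1
      _ = wd^[a] (wd g₁) z + wd^[a] (wd g₂) z :=
          ih ((smooth_wd hU h₁).1) ((smooth_wd hU h₂).1) hz
      _ = _ := by rw [← Function.iterate_succ_apply, ← Function.iterate_succ_apply]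

private lemma iter_add {U : Set ℂ} (hU : IsOpen U) (a b : ℕ) {g₁ g₂ : ℂ → ℂ}
    (h₁ : ContDiffOn ℝ (⊤ : ℕ∞) g₁ U) (h₂ : ContDiffOn ℝ (⊤ : ℕ∞) g₂ U) {z : ℂ} (hz : z ∈ U) :
    wd^[a] (wdb^[b] (fun x => g₁ x + g₂ x)) z
      = wd^[a] (wdb^[b] g₁) z + wd^[a] (wdb^[b] g₂) z := by
  calc wd^[a] (wdb^[b] fun x => g₁ x + g₂ x) z
      = wd^[a] (fun x => wdb^[b] g₁ x + wdb^[b] g₂ x) z :=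
        wd_iter_congr hU a (wdb_iter_add hU b h₁ h₂) hz
    _ = _ := wd_iter_add hU a (smooth_wdb_iter hU b h₁) (smooth_wdb_iter hU b h₂) hz
/-! ### Closure properties of `OClass` -/

private lemma iter_congr2 {U : Set ℂ} (hU : IsOpen U) (a b : ℕ) {g₁ g₂ : ℂ → ℂ}
    (h : Set.EqOn g₁ g₂ U) : Set.EqOn (wd^[a] (wdb^[b] g₁)) (wd^[a] (wdb^[b] g₂)) U :=
  wd_iter_congr hU a (wdb_iter_congr hU b h)

private lemma wdb_iter_conj : ∀ (b : ℕ) (g : ℂ → ℂ),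
    wdb^[b] (fun x => (starRingEnd ℂ) (g x)) = fun x => (starRingEnd ℂ) (wd^[b] g x) := by
  intro b
  induction b with
  | zero => intro g; simp
  | succ b ih =>
    intro g
    rw [Function.iterate_succ_apply, wdb_conj g, ih (wd g)]
    simp only [← Function.iterate_succ_apply]

private lemma wd_iter_conj : ∀ (a : ℕ) (g : ℂ → ℂ),
    wd^[a] (fun x => (starRingEnd ℂ) (g x)) = fun x => (starRingEnd ℂ) (wdb^[a] g x) := by
  intro a
  induction a with
  | zero => intro g; simp
  | succ a ih =>
    intro g
    rw [Function.iterate_succ_apply, wd_conj g, ih (wdb g)]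
    simp only [← Function.iterate_succ_apply]

private lemma OClass.of_le {k' k : ℕ} {ℓ C τ : ℝ} {f : ℂ → ℂ} (hk : k' ≤ k)
    (hf : OClass k ℓ C τ f) : OClass k' ℓ C τ f :=
  ⟨hf.1, fun a b hab => hf.2 a b (hab.trans hk)⟩

private lemma OClass.congr_exp {k : ℕ} {ℓ ℓ' C τ : ℝ} {f : ℂ → ℂ}
    (hf : OClass k ℓ C τ f) (hl : ℓ = ℓ') : OClass k ℓ' C τ f := hl ▸ hf

private lemma OClass.wdb_mem {k : ℕ} {ℓ C τ : ℝ} {f : ℂ → ℂ} (hf : OClass (k + 1) ℓ C τ f) :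
    OClass k (ℓ - 1) C τ (wdb f) := by
  obtain ⟨⟨U, hUo, hUs, hUsm⟩, hb⟩ := hf
  refine ⟨⟨U, hUo, hUs, (smooth_wd hUo hUsm).2⟩, ?_⟩
  intro a b hab z hz
  have h1 : wd^[a] (wdb^[b] (wdb f)) z = wd^[a] (wdb^[b + 1] f) z := by
    rw [Function.iterate_succ_apply]
  rw [h1, show ℓ - 1 - (a : ℝ) - (b : ℝ) = ℓ - (a : ℝ) - ((b + 1 : ℕ) : ℝ) by push_cast; ring]
  exact hb a (b + 1) (by omega) z hz

private lemma OClass.wd_mem {k : ℕ} {ℓ C τ : ℝ} {f : ℂ → ℂ} (hf : OClass (k + 1) ℓ C τ f) :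
    OClass k (ℓ - 1) C τ (wd f) := by
  obtain ⟨⟨U, hUo, hUs, hUsm⟩, hb⟩ := hf
  refine ⟨⟨U, hUo, hUs, (smooth_wd hUo hUsm).1⟩, ?_⟩
  intro a b hab z hz
  have hzU : z ∈ U := hUs hz
  have h1 : wd^[a] (wdb^[b] (wd f)) z = wd^[a + 1] (wdb^[b] f) z := by
    have e : Set.EqOn (wdb^[b] (wd f)) (wd (wdb^[b] f)) U :=
      fun x hx => (swap_one hUo b hUsm hx).symm
    calc wd^[a] (wdb^[b] (wd f)) z = wd^[a] (wd (wdb^[b] f)) z := wd_iter_congr hUo a e hzU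
      _ = wd^[a + 1] (wdb^[b] f) z := by rw [← Function.iterate_succ_apply]
  rw [h1, show ℓ - 1 - (a : ℝ) - (b : ℝ) = ℓ - ((a + 1 : ℕ) : ℝ) - (b : ℝ) by push_cast; ring]
  exact hb (a + 1) b (by omega) z hz

private lemma OClass.conj_mem {k : ℕ} {ℓ C τ : ℝ} {f : ℂ → ℂ} (hf : OClass k ℓ C τ f) :
    OClass k ℓ C τ (fun x => (starRingEnd ℂ) (f x)) := by
  obtain ⟨⟨U, hUo, hUs, hUsm⟩, hb⟩ := hf
  have hsm : ContDiffOn ℝ (⊤ : ℕ∞) (fun x => (starRingEnd ℂ) (f x)) U :=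
    Complex.conjCLE.toContinuousLinearMap.contDiff.comp_contDiffOn hUsm
  refine ⟨⟨U, hUo, hUs, hsm⟩, ?_⟩
  intro a b hab z hz
  have hzU : z ∈ U := hUs hz
  rw [wdb_iter_conj b f, wd_iter_conj a (wd^[b] f)]
  have habs : ‖(starRingEnd ℂ) (wdb^[a] (wd^[b] f) z)‖
      = ‖wdb^[a] (wd^[b] f) z‖ := Complex.norm_conj _
  rw [habs, show wdb^[a] (wd^[b] f) z = wd^[b] (wdb^[a] f) z from
    (swap_iter hUo b a hUsm hzU).symm]
  rw [show ℓ - (a : ℝ) - (b : ℝ) = ℓ - (b : ℝ) - (a : ℝ) by ring]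
  exact hb b a (by omega) z hz

private lemma OClass.add_mem {k : ℕ} {ℓ C C' τ : ℝ} {f g : ℂ → ℂ}
    (hf : OClass k ℓ C τ f) (hg : OClass k ℓ C' τ g) :
    OClass k ℓ (C + C') τ (fun x => f x + g x) := by
  obtain ⟨⟨U, hUo, hUs, hUsm⟩, hbf⟩ := hf
  obtain ⟨⟨V, hVo, hVs, hVsm⟩, hbg⟩ := hg
  have hWo : IsOpen (U ∩ V) := hUo.inter hVo
  have hUsm' : ContDiffOn ℝ (⊤ : ℕ∞) f (U ∩ V) := hUsm.mono Set.inter_subset_left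
  have hVsm' : ContDiffOn ℝ (⊤ : ℕ∞) g (U ∩ V) := hVsm.mono Set.inter_subset_right
  refine ⟨⟨U ∩ V, hWo, Set.subset_inter hUs hVs, hUsm'.add hVsm'⟩, ?_⟩
  intro a b hab z hz
  have hzW : z ∈ U ∩ V := ⟨hUs hz, hVs hz⟩
  rw [iter_add hWo a b hUsm' hVsm' hzW]
  calc ‖wd^[a] (wdb^[b] f) z + wd^[a] (wdb^[b] g) z‖
      ≤ ‖wd^[a] (wdb^[b] f) z‖ + ‖wd^[a] (wdb^[b] g) z‖ :=
        norm_add_le _ _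
    _ ≤ C * ‖z‖ ^ (ℓ - (a : ℝ) - (b : ℝ))
        + C' * ‖z‖ ^ (ℓ - (a : ℝ) - (b : ℝ)) :=
        add_le_add (hbf a b hab z hz) (hbg a b hab z hz)
    _ = (C + C') * ‖z‖ ^ (ℓ - (a : ℝ) - (b : ℝ)) := by ring
/-! ### Product closure -/

private lemma OClass.mul_mem : ∀ (k : ℕ) {ℓ₁ ℓ₂ C₁ C₂ τ : ℝ} {g₁ g₂ : ℂ → ℂ},
    0 ≤ C₁ → 0 ≤ C₂ → OClass k ℓ₁ C₁ τ g₁ → OClass k ℓ₂ C₂ τ g₂ →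
    OClass k (ℓ₁ + ℓ₂) (2 ^ k * C₁ * C₂) τ (fun x => g₁ x * g₂ x) := by
  intro k
  induction k with
  | zero =>
    intro ℓ₁ ℓ₂ C₁ C₂ τ g₁ g₂ hC₁ hC₂ h₁ h₂
    obtain ⟨⟨U, hUo, hUs, hUsm⟩, hb₁⟩ := h₁
    obtain ⟨⟨V, hVo, hVs, hVsm⟩, hb₂⟩ := h₂
    refine ⟨⟨U ∩ V, hUo.inter hVo, Set.subset_inter hUs hVs,
      (hUsm.mono Set.inter_subset_left).mul (hVsm.mono Set.inter_subset_right)⟩, ?_⟩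
    intro a b hab z hz
    have ha : a = 0 := by omega
    have hb : b = 0 := by omega
    subst ha; subst hb
    simp only [Function.iterate_zero_apply, pow_zero, one_mul, Nat.cast_zero, sub_zero]
    rw [norm_mul]
    calc ‖g₁ z‖ * ‖g₂ z‖
        ≤ (C₁ * ‖z‖ ^ ℓ₁) * (C₂ * ‖z‖ ^ ℓ₂) := by
          have e₁ := hb₁ 0 0 (by omega) z hz
          have e₂ := hb₂ 0 0 (by omega) z hz
          simp only [Function.iterate_zero_apply, Nat.cast_zero, sub_zero] at e₁ e₂
          exact mul_le_mul e₁ e₂ (norm_nonneg _)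
            (mul_nonneg hC₁ (Real.rpow_nonneg (norm_nonneg z) _))
      _ = C₁ * C₂ * ‖z‖ ^ (ℓ₁ + ℓ₂) := by
          rw [Real.rpow_add hz.1]; ring
  | succ k ih =>
    intro ℓ₁ ℓ₂ C₁ C₂ τ g₁ g₂ hC₁ hC₂ h₁ h₂
    have hCC : (0:ℝ) ≤ 2 ^ k * C₁ * C₂ :=
      mul_nonneg (mul_nonneg (by positivity) hC₁) hC₂
    -- the two derivative combinations, at level k
    have T₁ : OClass k (ℓ₁ + ℓ₂ - 1) (2 ^ k * C₁ * C₂) τ (fun x => wd g₁ x * g₂ x) :=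
      (ih hC₁ hC₂ h₁.wd_mem (h₂.of_le (Nat.le_succ k))).congr_exp (by ring)
    have T₂ : OClass k (ℓ₁ + ℓ₂ - 1) (2 ^ k * C₁ * C₂) τ (fun x => g₁ x * wd g₂ x) :=
      (ih hC₁ hC₂ (h₁.of_le (Nat.le_succ k)) h₂.wd_mem).congr_exp (by ring)
    have T₁' : OClass k (ℓ₁ + ℓ₂ - 1) (2 ^ k * C₁ * C₂) τ (fun x => wdb g₁ x * g₂ x) :=
      (ih hC₁ hC₂ h₁.wdb_mem (h₂.of_le (Nat.le_succ k))).congr_exp (by ring)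
    have T₂' : OClass k (ℓ₁ + ℓ₂ - 1) (2 ^ k * C₁ * C₂) τ (fun x => g₁ x * wdb g₂ x) :=
      (ih hC₁ hC₂ (h₁.of_le (Nat.le_succ k)) h₂.wdb_mem).congr_exp (by ring)
    have hconst : 2 ^ k * C₁ * C₂ + 2 ^ k * C₁ * C₂ = 2 ^ (k + 1) * C₁ * C₂ := by ring
    have Td : OClass k (ℓ₁ + ℓ₂ - 1) (2 ^ (k + 1) * C₁ * C₂) τ
        (fun x => wd g₁ x * g₂ x + g₁ x * wd g₂ x) := hconst ▸ T₁.add_mem T₂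
    have Tdb : OClass k (ℓ₁ + ℓ₂ - 1) (2 ^ (k + 1) * C₁ * C₂) τ
        (fun x => wdb g₁ x * g₂ x + g₁ x * wdb g₂ x) := hconst ▸ T₁'.add_mem T₂'
    obtain ⟨⟨U, hUo, hUs, hUsm⟩, hb₁⟩ := h₁
    obtain ⟨⟨V, hVo, hVs, hVsm⟩, hb₂⟩ := h₂
    have hWo : IsOpen (U ∩ V) := hUo.inter hVo
    have hUsm' : ContDiffOn ℝ (⊤ : ℕ∞) g₁ (U ∩ V) := hUsm.mono Set.inter_subset_left
    have hVsm' : ContDiffOn ℝ (⊤ : ℕ∞) g₂ (U ∩ V) := hVsm.mono Set.inter_subset_right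
    refine ⟨⟨U ∩ V, hWo, Set.subset_inter hUs hVs, hUsm'.mul hVsm'⟩, ?_⟩
    intro a b hab z hz
    have hzW : z ∈ U ∩ V := ⟨hUs hz, hVs hz⟩
    by_cases hk : a + b ≤ k
    · have r₁ : OClass k ℓ₁ C₁ τ g₁ :=
        ⟨⟨U, hUo, hUs, hUsm⟩, fun a' b' h' => hb₁ a' b' (h'.trans (Nat.le_succ k))⟩
      have r₂ : OClass k ℓ₂ C₂ τ g₂ :=
        ⟨⟨V, hVo, hVs, hVsm⟩, fun a' b' h' => hb₂ a' b' (h'.trans (Nat.le_succ k))⟩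
      have := (ih hC₁ hC₂ r₁ r₂).2 a b hk z hz
      refine this.trans ?_
      have : (2:ℝ) ^ k * C₁ * C₂ ≤ 2 ^ (k + 1) * C₁ * C₂ := by
        have : (2:ℝ) ^ k ≤ 2 ^ (k + 1) := by
          apply pow_le_pow_right₀ (by norm_num) (Nat.le_succ k)
        nlinarith [mul_nonneg hC₁ hC₂]
      exact mul_le_mul_of_nonneg_right this (Real.rpow_nonneg (norm_nonneg z) _)
    · have hab1 : a + b = k + 1 := by omega
      rcases b with _ | b'
      · -- b = 0, a = k + 1
        rcases a with _ | a'
        · omega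
        · have ediff : Set.EqOn (wd (fun x => g₁ x * g₂ x))
              (fun x => wd g₁ x * g₂ x + g₁ x * wd g₂ x) (U ∩ V) := fun x hx =>
            (wd_mul (diff_on_open hWo hUsm' hx) (diff_on_open hWo hVsm' hx)).1
          have key : wd^[a' + 1] (wdb^[0] (fun x => g₁ x * g₂ x)) z
              = wd^[a'] (wdb^[0] (fun x => wd g₁ x * g₂ x + g₁ x * wd g₂ x)) z := by
            simp only [Function.iterate_zero_apply]
            rw [Function.iterate_succ_apply]
            exact wd_iter_congr hWo a' ediff hzW
          rw [key, show ℓ₁ + ℓ₂ - ((a' + 1 : ℕ) : ℝ) - ((0 : ℕ) : ℝ)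
            = ℓ₁ + ℓ₂ - 1 - ((a' : ℕ) : ℝ) - ((0 : ℕ) : ℝ) by push_cast; ring]
          exact Td.2 a' 0 (by omega) z hz
      · -- b = b' + 1
        have ediff : Set.EqOn (wdb (fun x => g₁ x * g₂ x))
            (fun x => wdb g₁ x * g₂ x + g₁ x * wdb g₂ x) (U ∩ V) := fun x hx =>
          (wd_mul (diff_on_open hWo hUsm' hx) (diff_on_open hWo hVsm' hx)).2
        have key : wd^[a] (wdb^[b' + 1] (fun x => g₁ x * g₂ x)) z
            = wd^[a] (wdb^[b'] (fun x => wdb g₁ x * g₂ x + g₁ x * wdb g₂ x)) z := by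
          rw [Function.iterate_succ_apply]
          exact iter_congr2 hWo a b' ediff hzW
        rw [key, show ℓ₁ + ℓ₂ - ((a : ℕ) : ℝ) - ((b' + 1 : ℕ) : ℝ)
          = ℓ₁ + ℓ₂ - 1 - ((a : ℕ) : ℝ) - ((b' : ℕ) : ℝ) by push_cast; ring]
        exact Tdb.2 a b' (by omega) z hz
/-! ### The composition estimate -/

private lemma comp_aux (C₀ C₁ τ₀ τ₁ : ℝ) (hC₀ : 0 ≤ C₀) (hC₁ : 0 ≤ C₁)
    (hτ₀ : 0 < τ₀) (hτ₁ : 0 < τ₁) (m : ℕ) (f : ℂ → ℂ)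
    (hmaps : ∀ z ∈ Dstar τ₁, f z ∈ Dstar τ₀) :
    ∀ (k n : ℕ) (h : ℂ → ℂ), k ≤ n → OClass k (n : ℝ) C₀ τ₀ h →
      OClass k (m : ℝ) C₁ τ₁ f →
      OClass k ((n * m : ℕ) : ℝ) ((2:ℝ) ^ (k * (k + 1) / 2) * C₀ * C₁ ^ n) τ₁ (h ∘ f) := by
  intro k
  induction k with
  | zero =>
    intro n h hkn hh hf
    obtain ⟨U₀, hU₀o, hU₀s, hU₀sm⟩ := hh.1
    obtain ⟨U₁, hU₁o, hU₁s, hU₁sm⟩ := hf.1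
    have hVo : IsOpen (U₁ ∩ f ⁻¹' U₀) :=
      ContinuousOn.isOpen_inter_preimage hU₁sm.continuousOn hU₁o hU₀o
    have hVs : Dstar τ₁ ⊆ U₁ ∩ f ⁻¹' U₀ := fun z hz => ⟨hU₁s hz, hU₀s (hmaps z hz)⟩
    have hVsm : ContDiffOn ℝ (⊤ : ℕ∞) (h ∘ f) (U₁ ∩ f ⁻¹' U₀) :=
      hU₀sm.comp (hU₁sm.mono Set.inter_subset_left) (fun x hx => hx.2)
    refine ⟨⟨_, hVo, hVs, hVsm⟩, ?_⟩
    intro a b hab z hz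
    have ha : a = 0 := by omega
    have hb : b = 0 := by omega
    subst ha; subst hb
    simp only [Function.iterate_zero_apply, Nat.cast_zero, sub_zero, Function.comp_apply]
    have h1 := hh.2 0 0 le_rfl (f z) (hmaps z hz)
    have h2 := hf.2 0 0 le_rfl z hz
    simp only [Function.iterate_zero_apply, Nat.cast_zero, sub_zero] at h1 h2
    have habs : (0:ℝ) ≤ ‖f z‖ := norm_nonneg _
    calc ‖h (f z)‖ ≤ C₀ * ‖f z‖ ^ ((n:ℕ):ℝ) := h1
      _ = C₀ * ‖f z‖ ^ (n:ℕ) := by rw [Real.rpow_natCast]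
      _ ≤ C₀ * (C₁ * ‖z‖ ^ ((m:ℕ):ℝ)) ^ (n:ℕ) :=
          mul_le_mul_of_nonneg_left (pow_le_pow_left₀ habs h2 n) hC₀
      _ = 2 ^ (0 * (0 + 1) / 2) * C₀ * C₁ ^ n * ‖z‖ ^ (((n * m : ℕ)):ℝ) := by
          rw [mul_pow, ← Real.rpow_natCast (‖z‖ ^ ((m:ℕ):ℝ)) n,
            ← Real.rpow_mul (norm_nonneg z),
            show ((m:ℝ) * (n:ℝ)) = ((n * m : ℕ):ℝ) by push_cast; ring]
          norm_num
          ring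
  | succ k ih =>
    intro n h hkn hh hf
    have hn1 : 1 ≤ n := le_trans (Nat.succ_le_succ (Nat.zero_le k)) hkn
    have hkn1 : k ≤ n - 1 := by omega
    obtain ⟨U₀, hU₀o, hU₀s, hU₀sm⟩ := hh.1
    obtain ⟨U₁, hU₁o, hU₁s, hU₁sm⟩ := hf.1
    have hVo : IsOpen (U₁ ∩ f ⁻¹' U₀) :=
      ContinuousOn.isOpen_inter_preimage hU₁sm.continuousOn hU₁o hU₀o
    have hVs : Dstar τ₁ ⊆ U₁ ∩ f ⁻¹' U₀ := fun z hz => ⟨hU₁s hz, hU₀s (hmaps z hz)⟩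
    have hVsm : ContDiffOn ℝ (⊤ : ℕ∞) (h ∘ f) (U₁ ∩ f ⁻¹' U₀) :=
      hU₀sm.comp (hU₁sm.mono Set.inter_subset_left) (fun x hx => hx.2)
    -- class memberships of the pieces
    have hfk : OClass k (m : ℝ) C₁ τ₁ f := hf.of_le (Nat.le_succ k)
    have hcast : ((n:ℝ) - 1) = ((n - 1 : ℕ) : ℝ) := by
      rw [Nat.cast_sub hn1, Nat.cast_one]
    have hwdh : OClass k ((n - 1 : ℕ) : ℝ) C₀ τ₀ (wd h) := hh.wd_mem.congr_exp hcast
    have hwdbh : OClass k ((n - 1 : ℕ) : ℝ) C₀ τ₀ (wdb h) := hh.wdb_mem.congr_exp hcast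
    have Hwd := ih (n - 1) (wd h) hkn1 hwdh hfk
    have Hwdb := ih (n - 1) (wdb h) hkn1 hwdbh hfk
    have hexpE : (((n - 1) * m : ℕ) : ℝ) + ((m : ℝ) - 1) = ((n * m : ℕ) : ℝ) - 1 := by
      rw [Nat.cast_mul, Nat.cast_sub hn1]
      push_cast
      ring
    have hexp2 : (k + 1) * (k + 1 + 1) / 2 = k * (k + 1) / 2 + (k + 1) := by
      have he : k * (k + 1) / 2 * 2 = k * (k + 1) := Nat.div_mul_cancel (Nat.even_mul_succ_self k).two_dvd
      have hd : (k + 1) * (k + 1 + 1) = k * (k + 1) + 2 * (k + 1) := by ring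
      omega
    have hK : (2:ℝ) ^ k * ((2:ℝ) ^ (k * (k + 1) / 2) * C₀ * C₁ ^ (n - 1)) * C₁
        + (2:ℝ) ^ k * ((2:ℝ) ^ (k * (k + 1) / 2) * C₀ * C₁ ^ (n - 1)) * C₁
        = (2:ℝ) ^ ((k + 1) * (k + 1 + 1) / 2) * C₀ * C₁ ^ n := by
      rw [hexp2, pow_add, show C₁ ^ n = C₁ ^ (n - 1) * C₁ by
        rw [← pow_succ]; congr 1; omega]
      ring
    have hKnn : (0:ℝ) ≤ (2:ℝ) ^ (k * (k + 1) / 2) * C₀ * C₁ ^ (n - 1) := by positivity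
    -- the four products and the two sums
    have Pc1 := ((OClass.mul_mem k hKnn hC₁ Hwd hf.wd_mem).congr_exp hexpE)
    have Pc2 := ((OClass.mul_mem k hKnn hC₁ Hwdb hf.wdb_mem.conj_mem).congr_exp hexpE)
    have Pb1 := ((OClass.mul_mem k hKnn hC₁ Hwd hf.wdb_mem).congr_exp hexpE)
    have Pb2 := ((OClass.mul_mem k hKnn hC₁ Hwdb hf.wd_mem.conj_mem).congr_exp hexpE)
    have Sd := hK ▸ (Pc1.add_mem Pc2)
    have Sdb := hK ▸ (Pb1.add_mem Pb2)
    refine ⟨⟨_, hVo, hVs, hVsm⟩, ?_⟩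
    intro a b hab z hz
    have hzV : z ∈ U₁ ∩ f ⁻¹' U₀ := hVs hz
    by_cases hk : a + b ≤ k
    · have base := (ih n h (by omega) (hh.of_le (Nat.le_succ k)) hfk).2 a b hk z hz
      refine base.trans ?_
      have hle : (2:ℝ) ^ (k * (k + 1) / 2) ≤ 2 ^ ((k + 1) * (k + 1 + 1) / 2) := by
        apply pow_le_pow_right₀ one_le_two
        rw [hexp2]; omega
      exact mul_le_mul_of_nonneg_right
        (mul_le_mul_of_nonneg_right (mul_le_mul_of_nonneg_right hle hC₀) (pow_nonneg hC₁ n))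
        (Real.rpow_nonneg (norm_nonneg z) _)
    · have hab1 : a + b = k + 1 := by omega
      have hdh : ∀ x ∈ U₁ ∩ f ⁻¹' U₀, DifferentiableAt ℝ h (f x) := fun x hx =>
        diff_on_open hU₀o hU₀sm hx.2
      have hdf : ∀ x ∈ U₁ ∩ f ⁻¹' U₀, DifferentiableAt ℝ f x := fun x hx =>
        diff_on_open hU₁o hU₁sm hx.1
      rcases b with _ | b'
      · rcases a with _ | a'
        · omega
        · have ediff : Set.EqOn (wd (h ∘ f))
              (fun x => (wd h ∘ f) x * wd f x
                + (wdb h ∘ f) x * (starRingEnd ℂ) (wdb f x)) (U₁ ∩ f ⁻¹' U₀) :=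
            fun x hx => (wd_comp (hdh x hx) (hdf x hx)).1
          have key : wd^[a' + 1] (wdb^[0] (h ∘ f)) z
              = wd^[a'] (wdb^[0] (fun x => (wd h ∘ f) x * wd f x
                + (wdb h ∘ f) x * (starRingEnd ℂ) (wdb f x))) z := by
            simp only [Function.iterate_zero_apply]
            rw [Function.iterate_succ_apply]
            exact wd_iter_congr hVo a' ediff hzV
          rw [key, show ((n * m : ℕ) : ℝ) - ((a' + 1 : ℕ) : ℝ) - ((0 : ℕ) : ℝ)
            = (((n * m : ℕ) : ℝ) - 1) - ((a' : ℕ) : ℝ) - ((0 : ℕ) : ℝ) by push_cast; ring]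
          exact Sd.2 a' 0 (by omega) z hz
      · have ediff : Set.EqOn (wdb (h ∘ f))
            (fun x => (wd h ∘ f) x * wdb f x
              + (wdb h ∘ f) x * (starRingEnd ℂ) (wd f x)) (U₁ ∩ f ⁻¹' U₀) :=
          fun x hx => (wd_comp (hdh x hx) (hdf x hx)).2
        have key : wd^[a] (wdb^[b' + 1] (h ∘ f)) z
            = wd^[a] (wdb^[b'] (fun x => (wd h ∘ f) x * wdb f x
              + (wdb h ∘ f) x * (starRingEnd ℂ) (wd f x))) z := by
          rw [Function.iterate_succ_apply]
          exact iter_congr2 hVo a b' ediff hzV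
        rw [key, show ((n * m : ℕ) : ℝ) - ((a : ℕ) : ℝ) - ((b' + 1 : ℕ) : ℝ)
          = (((n * m : ℕ) : ℝ) - 1) - ((a : ℕ) : ℝ) - ((b' : ℕ) : ℝ) by push_cast; ring]
        exact Sdb.2 a b' (by omega) z hz

/-- **Quantitative composition estimate for the classes `𝒪_k`**
(the (composition) axiom of Lemma A.1 of Lazzarini–Marco–Sauzin):
if `h ∈ 𝒪_k(n; C₀, τ₀)`, `f ∈ 𝒪_k(m; C₁, τ₁)` with `n ≥ k` and
`f(𝔻*(0,τ₁)) ⊆ 𝔻*(0,τ₀)`, then `h ∘ f ∈ 𝒪_k(nm; α_k C₀ C₁ⁿ, τ₁)` with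
`α_k = 2^{k(k+1)/2}`. -/
theorem oclass_composition
    (k n m : ℕ) (hkn : k ≤ n) (C₀ C₁ τ₀ τ₁ : ℝ)
    (hC₀ : 0 ≤ C₀) (hC₁ : 0 ≤ C₁) (hτ₀ : 0 < τ₀) (hτ₁ : 0 < τ₁)
    (h f : ℂ → ℂ)
    (hh : OClass k (n : ℝ) C₀ τ₀ h) (hf : OClass k (m : ℝ) C₁ τ₁ f)
    (hmaps : ∀ z ∈ Dstar τ₁, f z ∈ Dstar τ₀) :
    OClass k ((n * m : ℕ) : ℝ) ((2:ℝ) ^ (k * (k + 1) / 2) * C₀ * C₁ ^ n) τ₁ (h ∘ f) := by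
  exact comp_aux C₀ C₁ τ₀ τ₁ hC₀ hC₁ hτ₀ hτ₁ m f hmaps k n h hkn hh hf
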